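/- arXiv:2412.09364 — 3 statements merged into one kernel-verified Lean document; each statement's English description precedes it below -/
import Mathlib

section
/- In the model W ~ Bernoulli(h_W(X)), Z ~ Bernoulli(h_Z(X)) conditionally independent given X, Y = Z·W, with ideal proxy g*(x,w) = w·h_Z(x): the hard-label smoothing f̃_hard(x) := P(g*(X,W) ≥ 1/2 | X=x) equals h_W(x)·1[h_Z(x) ≥ 1/2], so the hard-labeling bias is f̃_hard(x) - f*(x) = h_W(x)·(1[h_Z(x) ≥ 1/2] - h_Z(x)), where f*(x) = h_W(x)h_Z(x). In contrast, the soft-label smoothing f̃_soft(x) := E[g*(X,W) | X=x] equals f*(x) exactly. -/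
open MeasureTheory ProbabilityTheory

/-- Hard versus soft labels for the ideal proxy `g*(x,w) = w·h_Z(x)` in the model
`W ~ Ber(h_W(X))`, `Z ~ Ber(h_Z(X))`, `W ⟂ Z | X`, `Y = Z·W` with `f*(x) = h_W(x)h_Z(x)`:
the hard-label smoothing equals `h_W(X)·1[h_Z(X) ≥ 1/2]`, giving bias
`h_W(X)·(1[h_Z(X) ≥ 1/2] - h_Z(X))`, while the soft-label smoothing equals `f*(X)` exactly. -/
theorem stmt_5 {Ω α : Type*} {m : MeasurableSpace Ω} [StandardBorelSpace Ω]
    [MeasurableSpace α] (μ : Measure Ω) [IsProbabilityMeasure μ]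
    (X : Ω → α) (W Z : Ω → ℝ) (hX : Measurable X) (hW : Measurable W) (hZ : Measurable Z)
    (hWfun hZfun : α → ℝ) (hWfunm : Measurable hWfun) (hZfunm : Measurable hZfun)
    (hWfun01 : ∀ a, hWfun a ∈ Set.Icc (0:ℝ) 1) (hZfun01 : ∀ a, hZfun a ∈ Set.Icc (0:ℝ) 1)
    (hW01 : ∀ ω, W ω = 0 ∨ W ω = 1) (hZ01 : ∀ ω, Z ω = 0 ∨ Z ω = 1)
    (hmX : MeasurableSpace.comap X inferInstance ≤ m)
    (hWber : μ[W | MeasurableSpace.comap X inferInstance] =ᵐ[μ] fun ω => hWfun (X ω))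
    (hZber : μ[Z | MeasurableSpace.comap X inferInstance] =ᵐ[μ] fun ω => hZfun (X ω))
    (hci : CondIndepFun (MeasurableSpace.comap X inferInstance) hmX W Z μ) :
    (μ[(fun ω => if (1/2 : ℝ) ≤ W ω * hZfun (X ω) then (1:ℝ) else 0) |
        MeasurableSpace.comap X inferInstance]
        =ᵐ[μ] fun ω => hWfun (X ω) * (if (1/2 : ℝ) ≤ hZfun (X ω) then 1 else 0))
    ∧ ((fun ω => (μ[(fun ω' => if (1/2 : ℝ) ≤ W ω' * hZfun (X ω') then (1:ℝ) else 0) |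
          MeasurableSpace.comap X inferInstance]) ω - hWfun (X ω) * hZfun (X ω))
        =ᵐ[μ] fun ω => hWfun (X ω) * ((if (1/2 : ℝ) ≤ hZfun (X ω) then 1 else 0) - hZfun (X ω)))
    ∧ (μ[(fun ω => W ω * hZfun (X ω)) | MeasurableSpace.comap X inferInstance]
        =ᵐ[μ] fun ω => hWfun (X ω) * hZfun (X ω)) := by
  classical
  set mX := MeasurableSpace.comap X inferInstance with hmXdef
  have hXmX : @Measurable Ω α mX _ X := Measurable.of_comap_le le_rfl
  have hcm : StronglyMeasurable[mX]
      (fun ω => (if (1/2 : ℝ) ≤ hZfun (X ω) then (1:ℝ) else 0)) := by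
    have : @Measurable Ω ℝ mX _
        ((fun a => if (1/2 : ℝ) ≤ hZfun a then (1:ℝ) else 0) ∘ X) :=
      (Measurable.ite (measurableSet_le measurable_const hZfunm)
        measurable_const measurable_const).comp hXmX
    exact this.stronglyMeasurable
  have hzm : StronglyMeasurable[mX] (fun ω => hZfun (X ω)) :=
    ((hZfunm.comp hXmX)).stronglyMeasurable
  have hWint : Integrable W μ := by
    refine (integrable_const (1:ℝ)).mono' hW.aestronglyMeasurable ?_
    filter_upwards with ω
    rcases hW01 ω with h | h <;> simp [h]
  have hWle : ∀ ω, ‖W ω‖ ≤ 1 := by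
    intro ω; rcases hW01 ω with h | h <;> simp [h]
  -- pointwise identity for the hard label
  have hptw : ∀ ω, (if (1/2 : ℝ) ≤ W ω * hZfun (X ω) then (1:ℝ) else 0) =
      (if (1/2 : ℝ) ≤ hZfun (X ω) then (1:ℝ) else 0) * W ω := by
    intro ω
    rcases hW01 ω with h | h
    · norm_num [h]
    · norm_num [h]
  have hcW_int : Integrable
      ((fun ω => (if (1/2 : ℝ) ≤ hZfun (X ω) then (1:ℝ) else 0)) * W) μ := by
    refine (integrable_const (1:ℝ)).mono'
      (((hcm.mono hmX).aestronglyMeasurable).mul hW.aestronglyMeasurable) ?_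
    filter_upwards with ω
    simp only [Pi.mul_apply, norm_mul]
    calc ‖(if (1/2 : ℝ) ≤ hZfun (X ω) then (1:ℝ) else 0)‖ * ‖W ω‖
        ≤ 1 * 1 := by
          gcongr
          · split <;> simp
          · exact hWle ω
      _ = 1 := by norm_num
  have hzW_int : Integrable ((fun ω => hZfun (X ω)) * W) μ := by
    refine (integrable_const (1:ℝ)).mono'
      (((hzm.mono hmX).aestronglyMeasurable).mul hW.aestronglyMeasurable) ?_
    filter_upwards with ω
    simp only [Pi.mul_apply, norm_mul]
    calc ‖hZfun (X ω)‖ * ‖W ω‖ ≤ 1 * 1 := by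
          gcongr
          · rw [Real.norm_eq_abs, abs_le]
            exact ⟨le_trans (by norm_num) (hZfun01 (X ω)).1, (hZfun01 (X ω)).2⟩
          · exact hWle ω
      _ = 1 := by norm_num
  have hard : μ[(fun ω => if (1/2 : ℝ) ≤ W ω * hZfun (X ω) then (1:ℝ) else 0) | mX]
      =ᵐ[μ] fun ω => hWfun (X ω) * (if (1/2 : ℝ) ≤ hZfun (X ω) then 1 else 0) := by
    have h1 : (fun ω => if (1/2 : ℝ) ≤ W ω * hZfun (X ω) then (1:ℝ) else 0)
        = ((fun ω => (if (1/2 : ℝ) ≤ hZfun (X ω) then (1:ℝ) else 0)) * W) := funext hptw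
    rw [h1]
    refine (condExp_mul_of_stronglyMeasurable_left hcm hcW_int hWint).trans ?_
    filter_upwards [hWber] with ω hω
    simp only [Pi.mul_apply, hω, mul_comm]
  have soft : μ[(fun ω => W ω * hZfun (X ω)) | mX]
      =ᵐ[μ] fun ω => hWfun (X ω) * hZfun (X ω) := by
    have h1 : (fun ω => W ω * hZfun (X ω)) = (fun ω => hZfun (X ω)) * W := by
      funext ω; simp [mul_comm]
    rw [h1]
    refine (condExp_mul_of_stronglyMeasurable_left hzm hzW_int hWint).trans ?_
    filter_upwards [hWber] with ω hω
    simp only [Pi.mul_apply, hω]; ring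
  refine ⟨hard, ?_, soft⟩
  filter_upwards [hard] with ω hω
  simp only [hω]; ring
end

section
/- (Peeling lemma) Let {Z_n(r)}_{r>0} be a family of nonnegative random variables, s > 0 and B ≥ s fixed, and Q : ℝ² → ℝ a function increasing in its first argument satisfying Q(2r, t) ≤ 2Q(r, t) for all r ≥ s, t > 0, and P(Z_n(r) ≥ Q(r,t)) ≤ e^{-t} for each fixed r ≥ s. Assume r ↦ Z_n(r) is nondecreasing. Then for any random variable U taking values in [s, B], P( Z_n(U) ≥ 2Q(U, t) ) ≤ ⌈log₂(2B/s)⌉ · e^{-t}. -/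
open MeasureTheory

/-- Peeling lemma: if `Z_n(r)` is nonnegative, nondecreasing in `r`, `Q` is increasing in
its first argument, satisfies `Q(2r,t) ≤ 2Q(r,t)` for `r ≥ s`, and
`P(Z_n(r) ≥ Q(r,t)) ≤ e^{-t}` for each fixed `r ≥ s`, then for any random `U ∈ [s,B]`,
`P(Z_n(U) ≥ 2Q(U,t)) ≤ ⌈log₂(2B/s)⌉·e^{-t}`. -/
theorem stmt_10 {Ω : Type*} [MeasurableSpace Ω] (μ : Measure Ω) [IsProbabilityMeasure μ]
    (Z : ℝ → Ω → ℝ) (Q : ℝ → ℝ → ℝ) (s B t : ℝ)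
    (hs : 0 < s) (hB : s ≤ B) (ht : 0 < t)
    (hZnonneg : ∀ r ω, 0 ≤ Z r ω)
    (hZmono : ∀ r₁ r₂ : ℝ, r₁ ≤ r₂ → ∀ ω, Z r₁ ω ≤ Z r₂ ω)
    (hQmono : ∀ u : ℝ, 0 < u → Monotone (fun r => Q r u))
    (hQdouble : ∀ r, s ≤ r → Q (2 * r) t ≤ 2 * Q r t)
    (htail : ∀ r, s ≤ r → μ {ω | Q r t ≤ Z r ω} ≤ ENNReal.ofReal (Real.exp (-t)))
    (U : Ω → ℝ) (hU : ∀ ω, U ω ∈ Set.Icc s B) :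
    μ {ω | 2 * Q (U ω) t ≤ Z (U ω) ω}
      ≤ (⌈Real.logb 2 (2 * B / s)⌉₊ : ENNReal) * ENNReal.ofReal (Real.exp (-t)) := by
  set N := ⌈Real.logb 2 (2 * B / s)⌉₊ with hN
  have h2N : 2 * B / s ≤ (2:ℝ) ^ N := by
    have h1 : Real.logb 2 (2 * B / s) ≤ (N : ℝ) := Nat.le_ceil _
    have hBpos : (0:ℝ) < B := hs.trans_le hB
    have hpos : (0:ℝ) < 2 * B / s := by positivity
    calc 2 * B / s = (2:ℝ) ^ Real.logb 2 (2 * B / s) :=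
          (Real.rpow_logb two_pos (by norm_num) hpos).symm
      _ ≤ (2:ℝ) ^ (N : ℝ) := Real.rpow_le_rpow_of_exponent_le one_le_two h1
      _ = (2:ℝ) ^ N := by rw [Real.rpow_natCast]
  have hsub : {ω | 2 * Q (U ω) t ≤ Z (U ω) ω} ⊆
      ⋃ k ∈ Finset.range N, {ω | Q (s * 2 ^ (k + 1)) t ≤ Z (s * 2 ^ (k + 1)) ω} := by
    intro ω hω
    simp only [Set.mem_setOf_eq] at hω
    obtain ⟨hUs, hUB⟩ := hU ω
    set k := ⌊Real.logb 2 (U ω / s)⌋₊ with hk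
    have hUspos : (0:ℝ) < U ω / s := div_pos (hs.trans_le hUs) hs
    have h1 : (1:ℝ) ≤ U ω / s := (one_le_div hs).mpr hUs
    have hlog0 : 0 ≤ Real.logb 2 (U ω / s) := Real.logb_nonneg one_lt_two h1
    have hlow : s * 2 ^ k ≤ U ω := by
      have h2 : (2:ℝ) ^ k ≤ U ω / s := by
        calc (2:ℝ) ^ k = (2:ℝ) ^ (k:ℝ) := (Real.rpow_natCast 2 k).symm
          _ ≤ (2:ℝ) ^ Real.logb 2 (U ω / s) :=
              Real.rpow_le_rpow_of_exponent_le one_le_two (Nat.floor_le hlog0)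
          _ = U ω / s := Real.rpow_logb two_pos (by norm_num) hUspos
      calc s * 2 ^ k ≤ s * (U ω / s) := by
            exact mul_le_mul_of_nonneg_left h2 hs.le
        _ = U ω := by field_simp
    have hhigh : U ω ≤ s * 2 ^ (k + 1) := by
      have h2 : U ω / s ≤ (2:ℝ) ^ (k + 1) := by
        have hlt : Real.logb 2 (U ω / s) < ((k + 1 : ℕ) : ℝ) := by
          push_cast; exact Nat.lt_floor_add_one _
        calc U ω / s = (2:ℝ) ^ Real.logb 2 (U ω / s) :=
              (Real.rpow_logb two_pos (by norm_num) hUspos).symm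
          _ ≤ (2:ℝ) ^ ((k + 1 : ℕ) : ℝ) :=
              Real.rpow_le_rpow_of_exponent_le one_le_two hlt.le
          _ = (2:ℝ) ^ (k + 1) := Real.rpow_natCast 2 (k + 1)
      calc U ω = s * (U ω / s) := by field_simp
        _ ≤ s * 2 ^ (k + 1) := mul_le_mul_of_nonneg_left h2 hs.le
    have hkN : k < N := by
      by_contra hcon
      push_neg at hcon
      have h2k : (2:ℝ) ^ N ≤ 2 ^ k := by
        exact pow_le_pow_right₀ one_le_two hcon
      have : 2 * B / s ≤ 2 ^ k := h2N.trans h2k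
      have hBk : 2 * B ≤ s * 2 ^ k := by
        rw [div_le_iff₀ hs] at this; linarith
      nlinarith
    refine Set.mem_biUnion (Finset.mem_range.mpr hkN) ?_
    simp only [Set.mem_setOf_eq]
    have hsk : s ≤ s * 2 ^ k := by nlinarith [one_le_pow₀ (M₀ := ℝ) (a := 2) one_le_two (n := k)]
    calc Q (s * 2 ^ (k + 1)) t = Q (2 * (s * 2 ^ k)) t := by ring_nf
      _ ≤ 2 * Q (s * 2 ^ k) t := hQdouble _ hsk
      _ ≤ 2 * Q (U ω) t := by
          have := hQmono t ht hlow
          simpa using by linarith [hQmono t ht hlow]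
      _ ≤ Z (U ω) ω := hω
      _ ≤ Z (s * 2 ^ (k + 1)) ω := hZmono _ _ hhigh ω
  calc μ {ω | 2 * Q (U ω) t ≤ Z (U ω) ω}
      ≤ μ (⋃ k ∈ Finset.range N, {ω | Q (s * 2 ^ (k + 1)) t ≤ Z (s * 2 ^ (k + 1)) ω}) :=
        measure_mono hsub
    _ ≤ ∑ k ∈ Finset.range N, μ {ω | Q (s * 2 ^ (k + 1)) t ≤ Z (s * 2 ^ (k + 1)) ω} :=
        measure_biUnion_finset_le _ _
    _ ≤ ∑ _k ∈ Finset.range N, ENNReal.ofReal (Real.exp (-t)) := by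
        refine Finset.sum_le_sum fun k _ => htail _ ?_
        nlinarith [one_le_pow₀ (M₀ := ℝ) (a := 2) one_le_two (n := k + 1)]
    _ = (N : ENNReal) * ENNReal.ofReal (Real.exp (-t)) := by
        rw [Finset.sum_const, Finset.card_range, nsmul_eq_mul]
end

section
/- Let ℓ(ŷ, y) = -φ(ŷ)y + Φ(ŷ) be a GLM-type loss with φ 1-Lipschitz, and suppose g̃, g* are square-integrable functions of (X,W) with smoothed versions h̃(x) = E[g̃(X,W)|X=x] and h*(x) = E[g*(X,W)|X=x]. Then for any functions f̂, f* of X: E[ℓ(f̂(X), g*(X,W)) - ℓ(f*(X), g*(X,W))] - E[ℓ(f̂(X), g̃(X,W)) - ℓ(f*(X), g̃(X,W))] ≤ ‖f̂ - f*‖₂ · ‖h̃ - h*‖₂. -/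
/-!
The two excess risks differ by `E[(φ(f̂) - φ(f*)) (g̃ - g*)]`, the `Φ` terms cancelling. As
`φ(f̂) - φ(f*)` is `X`-measurable, the tower property replaces `g̃ - g*` by `h̃ - h*`, and
Cauchy–Schwarz together with `|φ(f̂) - φ(f*)| ≤ |f̂ - f*|` gives the bound.
-/

open MeasureTheory

section

variable {Ω : Type*} {m₀ : MeasurableSpace Ω} {μ : Measure Ω}

theorem integral_mul_le_sqrt_integral_sq_mul_sqrt_integral_sq {f g : Ω → ℝ}
    (hf : MemLp f 2 μ) (hg : MemLp g 2 μ) :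
    ∫ ω, f ω * g ω ∂μ ≤ Real.sqrt (∫ ω, f ω ^ 2 ∂μ) * Real.sqrt (∫ ω, g ω ^ 2 ∂μ) := by
  have hofReal : ENNReal.ofReal 2 = 2 := ENNReal.ofReal_ofNat 2
  calc ∫ ω, f ω * g ω ∂μ ≤ ∫ ω, |f ω| * |g ω| ∂μ :=
        integral_mono (hf.integrable_mul hg) (hf.abs.integrable_mul hg.abs)
          fun ω => (le_abs_self _).trans_eq (abs_mul _ _)
    _ ≤ (∫ ω, |f ω| ^ (2 : ℝ) ∂μ) ^ (1 / 2 : ℝ) * (∫ ω, |g ω| ^ (2 : ℝ) ∂μ) ^ (1 / 2 : ℝ) :=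
        integral_mul_le_Lp_mul_Lq_of_nonneg Real.HolderConjugate.two_two
          (.of_forall fun _ => abs_nonneg _) (.of_forall fun _ => abs_nonneg _)
          (hofReal ▸ hf.abs) (hofReal ▸ hg.abs)
    _ = Real.sqrt (∫ ω, f ω ^ 2 ∂μ) * Real.sqrt (∫ ω, g ω ^ 2 ∂μ) := by
        simp only [Real.rpow_two, sq_abs, Real.sqrt_eq_rpow]

theorem integral_mul_le_sqrt_integral_sq_mul_sqrt_integral_condExp_sq [IsFiniteMeasure μ]
    {m : MeasurableSpace Ω} (hm : m ≤ m₀) {ψ g : Ω → ℝ} (hψm : StronglyMeasurable[m] ψ)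
    (hψ : MemLp ψ 2 μ) (hg : MemLp g 2 μ) :
    ∫ ω, ψ ω * g ω ∂μ ≤ Real.sqrt (∫ ω, ψ ω ^ 2 ∂μ) * Real.sqrt (∫ ω, (μ[g | m]) ω ^ 2 ∂μ) := by
  have htower : ∫ ω, ψ ω * g ω ∂μ = ∫ ω, ψ ω * (μ[g | m]) ω ∂μ := by
    rw [← integral_condExp hm]
    exact integral_congr_ae <| condExp_mul_of_stronglyMeasurable_left hψm
      (hψ.integrable_mul hg) (hg.integrable one_le_two)
  rw [htower]
  exact integral_mul_le_sqrt_integral_sq_mul_sqrt_integral_sq hψ (hg.condExp one_le_two)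

end

/-- GLM-type loss decorrelation: for `ℓ(ŷ,y) = -φ(ŷ)y + Φ(ŷ)` with `φ` 1-Lipschitz and
`f̂, f*` functions of `X`, the difference of excess risks under `g*` and `g̃` is bounded by
`‖f̂ - f*‖₂ · ‖h̃ - h*‖₂`, where `h̃ = E[g̃ | X]` and `h* = E[g* | X]`. -/
theorem stmt_15 {Ω : Type*} {m : MeasurableSpace Ω} (μ : Measure Ω) [IsProbabilityMeasure μ]
    (mX : MeasurableSpace Ω) (hmX : mX ≤ m)
    (φ Φ : ℝ → ℝ) (hφ : ∀ u v : ℝ, |φ u - φ v| ≤ |u - v|)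
    (gtil gstar : Ω → ℝ) (hgtil : MemLp gtil 2 μ) (hgstar : MemLp gstar 2 μ)
    (fhat fstar : Ω → ℝ)
    (hfhatm : StronglyMeasurable[mX] fhat) (hfstarm : StronglyMeasurable[mX] fstar)
    (hfhat : MemLp fhat 2 μ) (hfstar : MemLp fstar 2 μ) :
    ∫ ω, (((-(φ (fhat ω)) * gstar ω + Φ (fhat ω)) - (-(φ (fstar ω)) * gstar ω + Φ (fstar ω)))
        - ((-(φ (fhat ω)) * gtil ω + Φ (fhat ω)) - (-(φ (fstar ω)) * gtil ω + Φ (fstar ω)))) ∂μ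
      ≤ Real.sqrt (∫ ω, (fhat ω - fstar ω) ^ 2 ∂μ)
          * Real.sqrt (∫ ω, ((μ[gtil | mX]) ω - (μ[gstar | mX]) ω) ^ 2 ∂μ) := by
  have hφc : Continuous φ := (LipschitzWith.of_dist_le_mul fun u v => by
    simpa [Real.dist_eq] using hφ u v : LipschitzWith 1 φ).continuous
  set ψ : Ω → ℝ := fun ω => φ (fhat ω) - φ (fstar ω)
  have hψm : StronglyMeasurable[mX] ψ :=
    (hφc.comp_stronglyMeasurable hfhatm).sub (hφc.comp_stronglyMeasurable hfstarm)
  have hψ : MemLp ψ 2 μ := (hfhat.sub hfstar).of_le (hψm.mono hmX).aestronglyMeasurable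
    (.of_forall fun ω => hφ (fhat ω) (fstar ω))
  have hcondExp_sub : ∫ ω, (μ[gtil - gstar | mX]) ω ^ 2 ∂μ
      = ∫ ω, ((μ[gtil | mX]) ω - (μ[gstar | mX]) ω) ^ 2 ∂μ := by
    refine integral_congr_ae ?_
    filter_upwards [condExp_sub (hgtil.integrable one_le_two) (hgstar.integrable one_le_two) mX]
      with ω hω
    rw [hω, Pi.sub_apply]
  calc _ = ∫ ω, ψ ω * (gtil - gstar) ω ∂μ := integral_congr_ae (.of_forall fun ω => by
          simp only [ψ, Pi.sub_apply]; ring)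
    _ ≤ Real.sqrt (∫ ω, ψ ω ^ 2 ∂μ) * Real.sqrt (∫ ω, (μ[gtil - gstar | mX]) ω ^ 2 ∂μ) :=
        integral_mul_le_sqrt_integral_sq_mul_sqrt_integral_condExp_sq hmX hψm hψ
          (hgtil.sub hgstar)
    _ ≤ _ := by
        rw [hcondExp_sub]
        gcongr ?_ * _
        exact Real.sqrt_le_sqrt <| integral_mono hψ.integrable_sq (hfhat.sub hfstar).integrable_sq
          fun ω => sq_le_sq.mpr (hφ (fhat ω) (fstar ω))
end
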